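/- For a prime p > 3 and positive integers m, r, the p-adic valuation of g*_{10}(2mp^r, mp^r) - 1 is at least 3r, where g*_{10}(X, k) = Π_{1 ≤ i ≤ k, p ∤ i} (1 - X/i). -/

import Mathlib

/-!
Put k = m p^r. Since each i is a p-adic unit, the claim is the congruence
∏ (i - 2k) ≡ ∏ i (mod p^{3r}) over 0 < i < k, p ∤ i. Pairing i with k - i gives
(i - 2k)(k - i - 2k) = u_i + c with u_i = i(k - i) and c = 2k², and c² ≡ 0, so the product
of the pairs is ∏ u_i + c ∑_j ∏_{i ≠ j} u_i. As c ≡ 0 (mod p^{2r}), it remains to see that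
∑_j 1/u_j ≡ 0 (mod p^r). There u_j ≡ -j², and the sum of 1/j² over a full system of units
mod p^r vanishes: substituting x ↦ 2x in ∑ x² over the units gives (2² - 1) ∑ x² = 0, and
2, 3 are units because p > 3.
-/

open Finset

theorem ZMod.isUnit_natCast_prime_pow_iff {p r j : ℕ} (hp : p.Prime) (hr : r ≠ 0) :
    IsUnit (j : ZMod (p ^ r)) ↔ ¬ p ∣ j := by
  rw [ZMod.isUnit_iff_coprime, Nat.coprime_pow_right_iff (Nat.pos_of_ne_zero hr),
    Nat.coprime_comm, hp.coprime_iff_not_dvd]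

theorem sum_units_pow_eq_zero {R : Type*} [CommRing R] [Fintype Rˣ] (n : ℕ) (u : Rˣ)
    (hu : IsUnit ((u : R) ^ n - 1)) : ∑ x : Rˣ, (x : R) ^ n = 0 := by
  have hshift : ∑ x : Rˣ, ((u * x : Rˣ) : R) ^ n = ∑ x : Rˣ, (x : R) ^ n :=
    Fintype.sum_equiv (Equiv.mulLeft u) _ _ fun _ => rfl
  simp only [Units.val_mul, mul_pow, ← mul_sum] at hshift
  refine hu.mul_right_eq_zero.mp ?_
  rw [sub_mul, hshift, one_mul, sub_self]

theorem ZMod.sum_range_mul_natCast {M : Type*} [AddCommMonoid M] (n m : ℕ) [NeZero n]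
    (g : ZMod n → M) : ∑ j ∈ range (m * n), g j = m • ∑ x, g x := by
  induction m with
  | zero => simp
  | succ m ih =>
    rw [add_mul, one_mul, sum_range_add, ih, succ_nsmul]
    congr 1
    simp only [Nat.cast_add, Nat.cast_mul, ZMod.natCast_self, mul_zero, zero_add]
    exact sum_nbij' (↑) ZMod.val (by simp) (fun x _ => mem_range.mpr x.val_lt)
      (fun j hj => ZMod.val_cast_of_lt (mem_range.mp hj)) (fun x _ => ZMod.natCast_zmod_val x)
      fun _ _ => rfl

theorem ZMod.sum_filter_isUnit_inv_sq_eq_zero {n : ℕ} [NeZero n] (h2 : IsUnit (2 : ZMod n))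
    (h3 : IsUnit (3 : ZMod n)) : ∑ x ∈ univ.filter (IsUnit : ZMod n → Prop), (x ^ 2)⁻¹ = 0 :=
  calc ∑ x ∈ univ.filter (IsUnit : ZMod n → Prop), (x ^ 2)⁻¹
      = ∑ x : (ZMod n)ˣ, (((x⁻¹ : (ZMod n)ˣ) : ZMod n) ^ 2) := by
        symm
        refine sum_bij (fun x _ => (x : ZMod n)) (fun x _ => by simp)
          (fun _ _ _ _ => Units.ext) (fun x hx => ⟨(mem_filter.mp hx).2.unit, mem_univ _, rfl⟩)
          fun x _ => ?_
        rw [← Units.val_pow_eq_pow_val x, ZMod.inv_coe_unit, ← inv_pow, Units.val_pow_eq_pow_val]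
    _ = ∑ x : (ZMod n)ˣ, (x : ZMod n) ^ 2 := Fintype.sum_equiv (Equiv.inv _) _ _ fun _ => rfl
    _ = 0 := sum_units_pow_eq_zero 2 h2.unit (by norm_num [h3])

theorem ZMod.sum_filter_not_dvd_inv_sq_eq_zero {p r k : ℕ} (hp : p.Prime) (hp3 : 3 < p)
    (hr : r ≠ 0) (hk : p ^ r ∣ k) :
    ∑ j ∈ (range k).filter (fun j => ¬ p ∣ j), ((j : ZMod (p ^ r)) ^ 2)⁻¹ = 0 := by
  obtain ⟨m, rfl⟩ := hk
  have : NeZero (p ^ r) := ⟨pow_ne_zero _ hp.ne_zero⟩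
  have hunit : ∀ j : ℕ, 0 < j → j < p → IsUnit (j : ZMod (p ^ r)) := fun j hj0 hjp =>
    (ZMod.isUnit_natCast_prime_pow_iff hp hr).mpr (Nat.not_dvd_of_pos_of_lt hj0 hjp)
  rw [mul_comm, filter_congr fun j _ => (ZMod.isUnit_natCast_prime_pow_iff hp hr).symm,
    sum_filter, ZMod.sum_range_mul_natCast (p ^ r) m (fun x => if IsUnit x then (x ^ 2)⁻¹ else 0),
    ← sum_filter, ZMod.sum_filter_isUnit_inv_sq_eq_zero (mod_cast hunit 2 two_pos (by omega))
      (mod_cast hunit 3 three_pos hp3), smul_zero]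

@[to_additive]
theorem prod_filter_not_dvd_range_eq_prod_pairs {M : Type*} [CommMonoid M] {p k : ℕ}
    (hp2 : p.Coprime 2) (hk : p ∣ k) (f : ℕ → M) :
    ∏ i ∈ (range k).filter (fun i => ¬ p ∣ i), f i =
      ∏ i ∈ ((range k).filter (fun i => ¬ p ∣ i)).filter (fun i => 2 * i < k),
        f i * f (k - i) := by
  set S := (range k).filter (fun i => ¬ p ∣ i)
  have hreflect : ∀ i ∈ S, k - i ∈ S ∧ k - (k - i) = i ∧ (2 * (k - i) < k ↔ ¬ 2 * i < k) := by
    intro i hi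
    obtain ⟨hik, hpi⟩ := mem_filter.mp hi
    rw [mem_range] at hik
    have hi0 : i ≠ 0 := by rintro rfl; exact hpi (dvd_zero p)
    have hki : ¬ p ∣ k - i := fun h =>
      hpi (by simpa [Nat.sub_sub_self hik.le] using Nat.dvd_sub hk h)
    have h2i : 2 * i ≠ k := fun h => hpi (hp2.dvd_of_dvd_mul_left (h ▸ hk))
    exact ⟨mem_filter.mpr ⟨mem_range.mpr (by omega), hki⟩, by omega, by omega⟩
  rw [prod_mul_distrib, ← prod_filter_mul_prod_filter_not S (fun i => 2 * i < k)]
  congr 1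
  refine prod_nbij' (k - ·) (k - ·) ?_ ?_ ?_ ?_ ?_ <;> simp only [mem_filter]
  · exact fun i ⟨hi, h⟩ => ⟨(hreflect i hi).1, (hreflect i hi).2.2.mpr h⟩
  · exact fun i ⟨hi, h⟩ => ⟨(hreflect i hi).1, by have := (hreflect i hi).2.2; omega⟩
  · exact fun i ⟨hi, _⟩ => (hreflect i hi).2.1
  · exact fun i ⟨hi, _⟩ => (hreflect i hi).2.1
  · exact fun i ⟨hi, _⟩ => by rw [(hreflect i hi).2.1]

theorem prod_add_eq_of_mul_self_eq_zero {ι R : Type*} [CommRing R] [DecidableEq ι] {c : R}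
    (hc : c * c = 0) (s : Finset ι) (u : ι → R) :
    ∏ i ∈ s, (u i + c) = ∏ i ∈ s, u i + c * ∑ j ∈ s, ∏ i ∈ s.erase j, u i := by
  induction s using Finset.induction_on with
  | empty => simp
  | insert a s ha ih =>
    have herase : ∑ j ∈ s, ∏ i ∈ (insert a s).erase j, u i =
        u a * ∑ j ∈ s, ∏ i ∈ s.erase j, u i := by
      rw [mul_sum]
      refine sum_congr rfl fun j hj => ?_
      rw [erase_insert_of_ne (ne_of_mem_of_not_mem hj ha).symm,
        prod_insert fun h => ha (mem_of_mem_erase h)]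
    rw [prod_insert ha, ih, sum_insert ha, erase_insert ha, prod_insert ha, herase]
    linear_combination (∑ j ∈ s, ∏ i ∈ s.erase j, u i) * hc

theorem sum_prod_erase_eq_prod_mul_sum {ι R : Type*} [CommRing R] [DecidableEq ι] (s : Finset ι)
    {u v : ι → R} (huv : ∀ i ∈ s, u i * v i = 1) :
    ∑ j ∈ s, ∏ i ∈ s.erase j, u i = (∏ i ∈ s, u i) * ∑ j ∈ s, v j := by
  rw [mul_sum]
  refine sum_congr rfl fun j hj => ?_
  rw [← mul_prod_erase s u hj]
  linear_combination (∏ i ∈ s.erase j, u i) * (huv j hj).symm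

theorem ZMod.natCast_sum_prod_erase_mul_sub_eq_zero {p r k : ℕ} (hp : p.Prime) (hp3 : 3 < p)
    (hr : r ≠ 0) (hk : p ^ r ∣ k) :
    ((∑ j ∈ ((range k).filter (fun i => ¬ p ∣ i)).filter (fun i => 2 * i < k),
        ∏ i ∈ (((range k).filter (fun i => ¬ p ∣ i)).filter (fun i => 2 * i < k)).erase j,
          i * (k - i) : ℕ) : ZMod (p ^ r)) = 0 := by
  set S := (range k).filter (fun i => ¬ p ∣ i)
  set T := S.filter (fun i => 2 * i < k)
  have hkR : (k : ZMod (p ^ r)) = 0 := (ZMod.natCast_eq_zero_iff _ _).mpr hk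
  have hT : ∀ i ∈ T, i ≤ k ∧ IsUnit (i : ZMod (p ^ r)) := fun i hi => by
    obtain ⟨⟨hik, hpi⟩, -⟩ := mem_filter.mp hi |>.imp_left mem_filter.mp
    exact ⟨(mem_range.mp hik).le, (ZMod.isUnit_natCast_prime_pow_iff hp hr).mpr hpi⟩
  have hcast : ∀ i ∈ T, ((i * (k - i) : ℕ) : ZMod (p ^ r)) = -(i : ZMod (p ^ r)) ^ 2 :=
    fun i hi => by rw [Nat.cast_mul, Nat.cast_sub (hT i hi).1, hkR]; ring
  have hsq : ∑ i ∈ T, ((i : ZMod (p ^ r)) ^ 2)⁻¹ = 0 := by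
    have h2 : IsUnit (2 : ZMod (p ^ r)) := by
      exact_mod_cast (ZMod.isUnit_natCast_prime_pow_iff hp hr).mpr
        (Nat.not_dvd_of_pos_of_lt two_pos (by omega))
    refine h2.mul_right_eq_zero.mp ?_
    rw [← ZMod.sum_filter_not_dvd_inv_sq_eq_zero hp hp3 hr hk,
      sum_filter_not_dvd_range_eq_sum_pairs ((Nat.coprime_primes hp Nat.prime_two).mpr (by omega))
        ((dvd_pow_self p hr).trans hk), mul_sum]
    refine sum_congr rfl fun i hi => ?_
    rw [Nat.cast_sub (hT i hi).1, hkR, zero_sub, neg_sq, two_mul]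
  have hN : ((∑ j ∈ T, ∏ i ∈ T.erase j, i * (k - i) : ℕ) : ZMod (p ^ r)) =
      ∑ j ∈ T, ∏ i ∈ T.erase j, -(i : ZMod (p ^ r)) ^ 2 := by
    rw [Nat.cast_sum]
    exact sum_congr rfl fun j _ => by
      rw [Nat.cast_prod]; exact prod_congr rfl fun i hi => hcast i (mem_of_mem_erase hi)
  rw [hN, sum_prod_erase_eq_prod_mul_sum T (v := fun i => -((i : ZMod (p ^ r)) ^ 2)⁻¹),
    sum_neg_distrib, hsq, neg_zero, mul_zero]
  intro i hi
  rw [neg_mul_neg, ZMod.mul_inv_of_unit _ ((hT i hi).2.pow 2)]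

theorem ZMod.prod_filter_not_dvd_sub_two_mul_eq_prod {p r k : ℕ} (hp : p.Prime) (hp3 : 3 < p)
    (hr : r ≠ 0) (hk : p ^ r ∣ k) :
    ∏ i ∈ (range k).filter (fun i => ¬ p ∣ i), ((i : ZMod (p ^ (3 * r))) - 2 * k) =
      ∏ i ∈ (range k).filter (fun i => ¬ p ∣ i), (i : ZMod (p ^ (3 * r))) := by
  set T := ((range k).filter (fun i => ¬ p ∣ i)).filter (fun i => 2 * i < k)
  set N := ∑ j ∈ T, ∏ i ∈ T.erase j, i * (k - i)
  set c : ZMod (p ^ (3 * r)) := 2 * (k : ZMod (p ^ (3 * r))) ^ 2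
  have hc : c * c = 0 := by
    have : p ^ (3 * r) ∣ k ^ 4 :=
      (pow_dvd_pow p (by omega)).trans (pow_mul p r 4 ▸ pow_dvd_pow_of_dvd hk 4)
    rw [show c * c = 4 * ((k ^ 4 : ℕ) : ZMod (p ^ (3 * r))) by push_cast; ring,
      (ZMod.natCast_eq_zero_iff _ _).mpr this, mul_zero]
  have hcN : c * N = 0 := by
    have hN : p ^ r ∣ N := (ZMod.natCast_eq_zero_iff _ _).mp
      (ZMod.natCast_sum_prod_erase_mul_sub_eq_zero hp hp3 hr hk)
    have : p ^ (3 * r) ∣ k ^ 2 * N := by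
      rw [show 3 * r = r * 2 + r by ring, pow_add, pow_mul]
      exact mul_dvd_mul (pow_dvd_pow_of_dvd hk 2) hN
    rw [show c * N = 2 * ((k ^ 2 * N : ℕ) : ZMod (p ^ (3 * r))) by push_cast; ring,
      (ZMod.natCast_eq_zero_iff _ _).mpr this, mul_zero]
  have hp2 : p.Coprime 2 := (Nat.coprime_primes hp Nat.prime_two).mpr (by omega)
  have hpk : p ∣ k := (dvd_pow_self p hr).trans hk
  have hpair : ∀ i ∈ T,
      ((i : ZMod (p ^ (3 * r))) - 2 * k) * (((k - i : ℕ) : ZMod (p ^ (3 * r))) - 2 * k) =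
        ((i * (k - i) : ℕ) : ZMod (p ^ (3 * r))) + c := fun i hi => by
    have hik : i ≤ k := (mem_range.mp (mem_filter.mp (mem_filter.mp hi).1).1).le
    push_cast [Nat.cast_sub hik]
    ring
  rw [prod_filter_not_dvd_range_eq_prod_pairs hp2 hpk,
    prod_filter_not_dvd_range_eq_prod_pairs hp2 hpk, prod_congr rfl hpair,
    prod_add_eq_of_mul_self_eq_zero hc]
  push_cast [N] at hcN ⊢
  rw [hcN, add_zero]

theorem filter_not_dvd_Icc_eq_range {p k : ℕ} (hk : p ∣ k) :
    (Icc 1 k).filter (fun i => ¬ p ∣ i) = (range k).filter (fun i => ¬ p ∣ i) := by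
  ext i
  simp only [mem_filter, mem_Icc, mem_range, and_congr_left_iff]
  intro hpi
  have hi0 : i ≠ 0 := by rintro rfl; exact hpi (dvd_zero p)
  have hik : i ≠ k := by rintro rfl; exact hpi hk
  omega

theorem padicNorm_div_sub_one_le {p : ℕ} [Fact p.Prime] {a b : ℤ} {n : ℕ}
    (hab : (p : ℤ) ^ n ∣ a - b) (hb : ¬ (p : ℤ) ∣ b) :
    padicNorm p ((a : ℚ) / b - 1) ≤ (p : ℚ) ^ (-(n : ℤ)) := by
  have hb0 : (b : ℚ) ≠ 0 := Int.cast_ne_zero.mpr fun h => hb (h ▸ dvd_zero _)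
  rw [div_sub_one hb0, padicNorm.div, (padicNorm.int_eq_one_iff b).mpr hb, div_one,
    ← Int.cast_sub]
  exact padicNorm.dvd_iff_norm_le.mp (by exact_mod_cast hab)

theorem g_star_sub_one_padic_general (p : ℕ) (hp : p.Prime) (hp3 : 3 < p) (m r : ℕ)
    (hr : 1 ≤ r) :
    padicNorm p
        ((∏ i ∈ (Finset.Icc 1 (m * p ^ r)).filter (fun i => ¬ p ∣ i),
            (1 - (2 * m * p ^ r : ℚ) / (i : ℚ))) - 1) ≤
      (p : ℚ) ^ (-(3 * r : ℤ)) := by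
  have : Fact p.Prime := ⟨hp⟩
  have hk : p ^ r ∣ m * p ^ r := dvd_mul_left _ _
  rw [filter_not_dvd_Icc_eq_range ((dvd_pow_self p (by omega)).trans hk)]
  set S := (range (m * p ^ r)).filter (fun i => ¬ p ∣ i)
  have hfactor : ∏ i ∈ S, (1 - (2 * m * p ^ r : ℚ) / i) =
      ((∏ i ∈ S, ((i : ℤ) - 2 * (m * p ^ r : ℕ)) : ℤ) : ℚ) / ((∏ i ∈ S, (i : ℤ) : ℤ) : ℚ) := by
    push_cast
    rw [← prod_div_distrib]
    refine prod_congr rfl fun i hi => ?_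
    have hi0 : (i : ℚ) ≠ 0 := Nat.cast_ne_zero.mpr fun h => (mem_filter.mp hi).2 (h ▸ dvd_zero p)
    field_simp
  rw [hfactor, show (-(3 * r : ℤ)) = -((3 * r : ℕ) : ℤ) by push_cast; ring]
  refine padicNorm_div_sub_one_le ?_ ?_
  · rw [← Nat.cast_pow, ← ZMod.intCast_eq_intCast_iff_dvd_sub]
    simp only [Int.cast_prod, Int.cast_sub, Int.cast_mul, Int.cast_natCast, Int.cast_ofNat]
    exact (ZMod.prod_filter_not_dvd_sub_two_mul_eq_prod hp hp3 (by omega) hk).symm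
  · rw [Prime.dvd_finsetProd_iff (Nat.prime_iff_prime_int.mp hp)]
    exact fun ⟨i, hi, hpi⟩ => (mem_filter.mp hi).2 (Int.natCast_dvd_natCast.mp hpi)

theorem g_star_sub_one_padic (p : ℕ) (hp : p.Prime) (hp3 : 3 < p) (m r : ℕ)
    (hm : 1 ≤ m) (hr : 1 ≤ r) :
    padicNorm p
        ((∏ i ∈ (Finset.Icc 1 (m * p ^ r)).filter (fun i => ¬ p ∣ i),
            (1 - (2 * m * p ^ r : ℚ) / (i : ℚ))) - 1) ≤
      (p : ℚ) ^ (-(3 * r : ℤ)) :=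
  g_star_sub_one_padic_general p hp hp3 m r hr
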